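/- arXiv:2406.05781 — 2 statements merged into one kernel-verified Lean document; each statement's English description precedes it below -/
import Mathlib

section
/- Let n > m_1 ≥ 1 be coprime integers, let m_2 be the unique integer with 0 < m_2 < n + 1 and m_1·m_2 ≡ 1 (mod n), and set c = (m_1·m_2 − 1)/n ∈ ℕ. Let H = {(u_1,u_2) ∈ ℕ² : u_1 + m_1·u_2 ≡ 0 (mod n)} and E = {(n,0),(0,n)}. Then (H,E) is a normal orthogonal semigroup of order n, and H has an AG witness (equivalently, H is an AG semigroup) if and only if c divides m_1 − 1 and c divides m_2 − 1 (when c = 0 this means m_1 = m_2 = 1). (Over a field containing a primitive n-th root of unity ξ, k[H] is the invariant ring of the cyclic group generated by diag(ξ, ξ^{m_1}) acting on k[t_1,t_2].) -/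
/-!
The Apéry set of `H` is the graph of `u₂ ↦ (-m₁ u₂ mod n)` over `0 ≤ u₂ < n`, and swapping the
coordinates exchanges the roles of `m₁` and `m₂`. For `w = (n - k, n - l)` with
`k + m₁ l = n = l + m₂ k`, the socle consists of the two progressions `(m₁ t, n - t)`, `1 ≤ t ≤ l`,
and `(n - s, m₂ s)`, `1 ≤ s ≤ k`, which meet at `w`: every Apéry element not below `w` lies on one
of them, and its partner in condition (ii) is the reflected point of the same progression.
Conversely, condition (i) puts the first Apéry element after the progression `(m₁ t, n - t)`, which
is not maximal, below `w`, and this pins `w` down to the shape above. Finally, since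
`m₁ m₂ = n c + 1`, the system `k + m₁ l = n = l + m₂ k` says exactly `m₁ = 1 + c k`, `m₂ = 1 + c l`.
-/

open scoped Classical

namespace AGpaper

/-- The degree of an integer vector: sum of coordinates. -/
def degZ {d : ℕ} (x : Fin d → ℤ) : ℤ := ∑ i, x i

/-- An orthogonal semigroup of order `m` in `ℕ^d`. -/
def IsOrthogonal (d m : ℕ) (H : AddSubmonoid (Fin d → ℤ)) : Prop :=
  H.FG ∧
  (∀ x ∈ H, ∀ i, 0 ≤ x i) ∧
  (∀ i : Fin d, Pi.single i (m : ℤ) ∈ H) ∧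
  (∃ n : ℕ, 0 < n ∧ ∀ x ∈ H, ∀ i, (m : ℤ) ∣ (n : ℤ) * x i) ∧
  (∀ i : Fin d, ∀ m' : ℕ, 0 < m' → m' < m → Pi.single i (m' : ℤ) ∉ H)

/-- The Apéry set of an orthogonal semigroup w.r.t. its extreme rays `m eᵢ`. -/
def apery (d m : ℕ) (H : AddSubmonoid (Fin d → ℤ)) : Set (Fin d → ℤ) :=
  {x | x ∈ H ∧ ∀ i : Fin d, x - Pi.single i (m : ℤ) ∉ H}

/-- The socle: maximal elements of the Apéry set with respect to `≤_H`. -/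
def soc (d m : ℕ) (H : AddSubmonoid (Fin d → ℤ)) : Set (Fin d → ℤ) :=
  {x | x ∈ apery d m H ∧ ∀ y ∈ apery d m H, y - x ∈ H → x = y}

/-- `ω_H = {-w + m e₁ + ⋯ + m e_d + h : w ∈ Soc(H,E), h ∈ H}`. -/
def omegaH (d m : ℕ) (H : AddSubmonoid (Fin d → ℤ)) : Set (Fin d → ℤ) :=
  {x | ∃ w ∈ soc d m H, ∃ h ∈ H, x = -w + (fun _ => (m : ℤ)) + h}

/-- Normality of a submonoid of `ℤ^d`. -/
def IsNormalSg (d : ℕ) (H : AddSubmonoid (Fin d → ℤ)) : Prop :=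
  ∀ g ∈ AddSubgroup.closure (H : Set (Fin d → ℤ)),
    (∃ n : ℕ, 1 ≤ n ∧ n • g ∈ H) → g ∈ H

/-- An AG witness `w ∈ Soc(H,E)`. -/
def AGwitness (d m : ℕ) (H : AddSubmonoid (Fin d → ℤ)) (w : Fin d → ℤ) : Prop :=
  w ∈ soc d m H ∧
  (∀ h ∈ apery d m H, ((h ∈ soc d m H ∧ h ≠ w) ↔ w - h ∉ H)) ∧
  (∀ h ∈ soc d m H, h ≠ w →
    ∃ i : Fin d, ∃ h' ∈ soc d m H, h + h' = w + Pi.single i (m : ℤ))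

/-- `x` is a minimal generator of `ω_H`. -/
def minGen (d m : ℕ) (H : AddSubmonoid (Fin d → ℤ)) (x : Fin d → ℤ) : Prop :=
  x ∈ omegaH d m H ∧ ∀ h ∈ H, h ≠ 0 → x - h ∉ omegaH d m H

/-- The semigroup `H = {(u₁,u₂) ∈ ℕ² : u₁ + m₁·u₂ ≡ 0 (mod n)}` as a submonoid of `ℤ²`. -/
def Hnm (n m₁ : ℕ) : AddSubmonoid (Fin 2 → ℤ) where
  carrier := {x | (∀ i, 0 ≤ x i) ∧ (n : ℤ) ∣ (x 0 + (m₁ : ℤ) * x 1)}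
  zero_mem' := by
    refine ⟨fun i => le_refl 0, ?_⟩
    simp
  add_mem' := by
    rintro a b ⟨ha1, ha2⟩ ⟨hb1, hb2⟩
    refine ⟨fun i => add_nonneg (ha1 i) (hb1 i), ?_⟩
    have h : (a + b) 0 + (m₁ : ℤ) * (a + b) 1 =
        (a 0 + (m₁ : ℤ) * a 1) + (b 0 + (m₁ : ℤ) * b 1) := by
      simp [Pi.add_apply]; ring
    rw [h]
    exact dvd_add ha2 hb2

theorem agWitness_iff {d m : ℕ} {H : AddSubmonoid (Fin d → ℤ)} {w : Fin d → ℤ} :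
    AGwitness d m H w ↔ w ∈ soc d m H ∧ (∀ h ∈ apery d m H \ soc d m H, w - h ∈ H) ∧
      ∀ h ∈ soc d m H, h ≠ w →
        ∃ i : Fin d, ∃ h' ∈ soc d m H, h + h' = w + Pi.single i (m : ℤ) := by
  refine ⟨fun ⟨hw, hi, hii⟩ => ⟨hw, fun h ⟨hh, hns⟩ => ?_, hii⟩,
    fun ⟨hw, hcl, hii⟩ => ⟨hw, ?_, hii⟩⟩
  · by_contra hwh
    exact hns ((hi h hh).2 hwh).1
  · refine fun h hh => ⟨fun ⟨hs, hne⟩ hwh => hne (hs.2 w hw.1 hwh), fun hwh => ?_⟩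
    refine ⟨by_contra fun hns => hwh (hcl h ⟨hh, hns⟩), ?_⟩
    rintro rfl
    exact hwh (by simp)

theorem eq_of_dvd_sub_of_lt {N a b : ℤ} (h : N ∣ a - b) (ha : 0 ≤ a) (haN : a < N)
    (hb : 0 ≤ b) (hbN : b < N) : a = b := by
  have hmod : b % N = a % N := Int.ModEq.eq (Int.modEq_iff_dvd.2 h)
  rwa [Int.emod_eq_of_lt ha haN, Int.emod_eq_of_lt hb hbN, eq_comm] at hmod

section Hnm

variable {n m₁ : ℕ} {x y : Fin 2 → ℤ}

theorem mem_Hnm_iff : x ∈ Hnm n m₁ ↔ 0 ≤ x ∧ (n : ℤ) ∣ x 0 + m₁ * x 1 := Iff.rfl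

theorem le_iff_fin_two : x ≤ y ↔ x 0 ≤ y 0 ∧ x 1 ≤ y 1 := by
  simp [Pi.le_def, Fin.forall_fin_two]

theorem sub_mem_Hnm_iff (hx : x ∈ Hnm n m₁) (hy : y ∈ Hnm n m₁) :
    y - x ∈ Hnm n m₁ ↔ x ≤ y := by
  refine ⟨fun h => sub_nonneg.1 h.1, fun h => ⟨sub_nonneg.2 h, ?_⟩⟩
  rw [Pi.sub_apply, Pi.sub_apply,
    show y 0 - x 0 + m₁ * (y 1 - x 1) = y 0 + m₁ * y 1 - (x 0 + m₁ * x 1) by ring]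
  exact dvd_sub hy.2 hx.2

theorem single_mem_Hnm (i : Fin 2) : Pi.single i (n : ℤ) ∈ Hnm n m₁ := by
  refine mem_Hnm_iff.2 ⟨Pi.single_nonneg.2 n.cast_nonneg, ?_⟩
  fin_cases i <;> simp

theorem fg_Hnm (hn : 0 < n) : (Hnm n m₁).FG := by
  have hnZ : (0 : ℤ) < n := by exact_mod_cast hn
  set S := (Hnm n m₁ : Set (Fin 2 → ℤ)) ∩ Set.Icc 0 (fun _ => (n : ℤ))
  refine (AddSubmonoid.fg_iff _).2 ⟨S, le_antisymm (AddSubmonoid.closure_le.2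
    Set.inter_subset_left) fun x hx => ?_, (Set.finite_Icc _ _).subset Set.inter_subset_right⟩
  set r : Fin 2 → ℤ := fun i => x i % n
  have hr : r ∈ AddSubmonoid.closure S := by
    refine AddSubmonoid.subset_closure ⟨⟨fun i => Int.emod_nonneg _ hnZ.ne', ?_⟩,
      fun i => Int.emod_nonneg _ hnZ.ne', fun i => (Int.emod_lt_of_pos _ hnZ).le⟩
    rw [show r 0 + m₁ * r 1 = x 0 + m₁ * x 1 - n * (x 0 / n + m₁ * (x 1 / n)) by
      simp only [r, Int.emod_def]; ring]
    exact dvd_sub hx.2 (dvd_mul_right _ _)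
  have hsingle (i : Fin 2) : Pi.single i (n : ℤ) ∈ AddSubmonoid.closure S :=
    AddSubmonoid.subset_closure ⟨single_mem_Hnm i, Pi.single_nonneg.2 hnZ.le, by
      fin_cases i <;> simp [le_iff_fin_two, hnZ.le]⟩
  have hq (i : Fin 2) : ((x i / n).toNat : ℤ) = x i / n :=
    Int.toNat_of_nonneg (Int.ediv_nonneg (hx.1 i) hnZ.le)
  have hx_eq : x = r + (x 0 / n).toNat • Pi.single 0 (n : ℤ) +
      (x 1 / n).toNat • Pi.single 1 (n : ℤ) := by
    refine funext <| Fin.forall_fin_two.2 ⟨?_, ?_⟩ <;>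
      simp only [nsmul_eq_mul, Pi.add_apply, Pi.mul_apply, Pi.natCast_apply, hq, Pi.single_eq_same,
        Pi.single_eq_of_ne zero_ne_one, Pi.single_eq_of_ne one_ne_zero, mul_zero, add_zero, r] <;>
      linarith [Int.emod_add_mul_ediv (x 0) n, Int.emod_add_mul_ediv (x 1) n]
  rw [hx_eq]
  exact add_mem (add_mem hr (nsmul_mem (hsingle 0) _)) (nsmul_mem (hsingle 1) _)

theorem isOrthogonal_Hnm (hn : 0 < n) (hcop : n.Coprime m₁) : IsOrthogonal 2 n (Hnm n m₁) := by
  refine ⟨fg_Hnm hn, fun x hx => hx.1, single_mem_Hnm, ⟨n, hn, fun x _ i => dvd_mul_right _ _⟩,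
    fun i m' hm' hm'n hmem => ?_⟩
  have hd := (mem_Hnm_iff.1 hmem).2
  have : n ∣ m' := by
    fin_cases i
    · exact Int.natCast_dvd_natCast.1 (by simpa using hd)
    · exact hcop.dvd_of_dvd_mul_left (Int.natCast_dvd_natCast.1 (by simpa using hd))
  exact absurd (Nat.le_of_dvd hm' this) (by omega)

theorem isNormalSg_Hnm : IsNormalSg 2 (Hnm n m₁) := by
  rintro g hg ⟨N, hN, hNg⟩
  let φ : (Fin 2 → ℤ) →+ ℤ := AddMonoidHom.mk' (fun x => x 0 + m₁ * x 1) fun a b => by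
    simp only [Pi.add_apply]
    ring
  have hlattice : AddSubgroup.closure (Hnm n m₁ : Set (Fin 2 → ℤ)) ≤
      (AddSubgroup.zmultiples (n : ℤ)).comap φ :=
    (AddSubgroup.closure_le _).2 fun x hx => Int.mem_zmultiples_iff.2 hx.2
  refine ⟨fun i => nonneg_of_mul_nonneg_right (by simpa using hNg.1 i) (by exact_mod_cast hN),
    Int.mem_zmultiples_iff.1 (hlattice hg)⟩

theorem mem_apery_Hnm_iff : x ∈ apery 2 n (Hnm n m₁) ↔ x ∈ Hnm n m₁ ∧ x 0 < n ∧ x 1 < n := by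
  refine and_congr_right fun hx => ?_
  have h0 := hx.1 0
  have h1 := hx.1 1
  simp only [Fin.forall_fin_two, sub_mem_Hnm_iff (single_mem_Hnm _) hx, le_iff_fin_two,
    Pi.single_eq_same, Pi.single_eq_of_ne zero_ne_one, Pi.single_eq_of_ne one_ne_zero]
  omega

theorem vec_mem_apery_iff {a b : ℤ} :
    ![a, b] ∈ apery 2 n (Hnm n m₁) ↔
      (0 ≤ a ∧ a < n) ∧ (0 ≤ b ∧ b < n) ∧ (n : ℤ) ∣ a + m₁ * b := by
  simp only [mem_apery_Hnm_iff, mem_Hnm_iff, Pi.le_def, Fin.forall_fin_two, Pi.zero_apply,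
    Matrix.cons_val_zero, Matrix.cons_val_one]
  tauto

theorem mem_soc_Hnm_iff : x ∈ soc 2 n (Hnm n m₁) ↔
    x ∈ apery 2 n (Hnm n m₁) ∧ ∀ y ∈ apery 2 n (Hnm n m₁), x ≤ y → x = y :=
  and_congr_right fun hx => forall₂_congr fun y hy => by rw [sub_mem_Hnm_iff hx.1 hy.1]

theorem eq_of_mem_apery_of_snd_eq (hx : x ∈ apery 2 n (Hnm n m₁))
    (hy : y ∈ apery 2 n (Hnm n m₁)) (h : x 1 = y 1) : x = y := by
  obtain ⟨⟨hx0, hxd⟩, hxn, -⟩ := mem_apery_Hnm_iff.1 hx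
  obtain ⟨⟨hy0, hyd⟩, hyn, -⟩ := mem_apery_Hnm_iff.1 hy
  have hd : (n : ℤ) ∣ x 0 - y 0 := by
    rw [show x 0 - y 0 = x 0 + m₁ * x 1 - (y 0 + m₁ * y 1) by rw [h]; ring]
    exact dvd_sub hxd hyd
  exact funext <| Fin.forall_fin_two.2 ⟨eq_of_dvd_sub_of_lt hd (hx0 0) hxn (hy0 0) hyn, h⟩

theorem fst_eq_of_mem_apery (hx : x ∈ apery 2 n (Hnm n m₁)) (hlt : m₁ * (n - x 1) < n) :
    x 0 = m₁ * (n - x 1) := by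
  obtain ⟨⟨hx0, hxd⟩, hxn, hx1⟩ := mem_apery_Hnm_iff.1 hx
  refine eq_of_dvd_sub_of_lt ?_ (hx0 0) hxn (by nlinarith [hx0 1]) hlt
  rw [show x 0 - m₁ * (n - x 1) = x 0 + m₁ * x 1 - m₁ * n by ring]
  exact dvd_sub hxd (dvd_mul_left _ _)

end Hnm

section Swap

variable {n m₁ m₂ c : ℕ} {x y : Fin 2 → ℤ}

def coordSwap (x : Fin 2 → ℤ) : Fin 2 → ℤ := ![x 1, x 0]

@[simp] theorem coordSwap_zero : coordSwap x 0 = x 1 := rfl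

@[simp] theorem coordSwap_one : coordSwap x 1 = x 0 := rfl

theorem coordSwap_involutive : Function.Involutive coordSwap := fun _ =>
  funext <| Fin.forall_fin_two.2 ⟨rfl, rfl⟩

theorem coordSwap_le_coordSwap : coordSwap x ≤ coordSwap y ↔ x ≤ y := by
  simp [le_iff_fin_two, and_comm]

theorem dvd_add_mul_of_mul_eq (hinv : m₁ * m₂ = n * c + 1) {a b : ℤ}
    (h : (n : ℤ) ∣ a + m₁ * b) : (n : ℤ) ∣ b + m₂ * a := by
  have hinvZ : (m₁ : ℤ) * m₂ = n * c + 1 := by exact_mod_cast hinv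
  rw [show b + m₂ * a = m₂ * (a + m₁ * b) - n * (c * b) by linear_combination (-b) * hinvZ]
  exact dvd_sub (h.mul_left _) (dvd_mul_right _ _)

theorem mem_Hnm_iff_coordSwap (hinv : m₁ * m₂ = n * c + 1) :
    x ∈ Hnm n m₂ ↔ coordSwap x ∈ Hnm n m₁ := by
  simp only [mem_Hnm_iff, Pi.le_def, Fin.forall_fin_two, coordSwap_zero, coordSwap_one]
  refine and_congr (and_comm) ⟨dvd_add_mul_of_mul_eq ((mul_comm _ _).trans hinv),
    dvd_add_mul_of_mul_eq hinv⟩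

theorem mem_apery_iff_coordSwap (hinv : m₁ * m₂ = n * c + 1) :
    x ∈ apery 2 n (Hnm n m₂) ↔ coordSwap x ∈ apery 2 n (Hnm n m₁) := by
  rw [mem_apery_Hnm_iff, mem_apery_Hnm_iff, mem_Hnm_iff_coordSwap hinv, coordSwap_zero,
    coordSwap_one, and_comm (a := x 0 < n)]

theorem mem_soc_iff_coordSwap (hinv : m₁ * m₂ = n * c + 1) :
    x ∈ soc 2 n (Hnm n m₂) ↔ coordSwap x ∈ soc 2 n (Hnm n m₁) := by
  rw [mem_soc_Hnm_iff, mem_soc_Hnm_iff, mem_apery_iff_coordSwap hinv]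
  refine and_congr_right fun _ =>
    coordSwap_involutive.surjective.forall.trans (forall_congr' fun y => ?_)
  rw [mem_apery_iff_coordSwap hinv, ← coordSwap_le_coordSwap, coordSwap_involutive y,
    coordSwap_involutive.eq_iff]

theorem diff_subset_Iic_coordSwap (hinv : m₁ * m₂ = n * c + 1)
    (h : apery 2 n (Hnm n m₁) \ soc 2 n (Hnm n m₁) ⊆ Set.Iic x) :
    apery 2 n (Hnm n m₂) \ soc 2 n (Hnm n m₂) ⊆ Set.Iic (coordSwap x) := fun y ⟨hy, hys⟩ => by
  have := h ⟨(mem_apery_iff_coordSwap hinv).1 hy, fun hs => hys ((mem_soc_iff_coordSwap hinv).2 hs)⟩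
  rwa [Set.mem_Iic, ← coordSwap_le_coordSwap, coordSwap_involutive x]

end Swap

section Witness

variable {n m₁ m₂ c : ℕ} {k l : ℤ} {h w : Fin 2 → ℤ}

theorem agWitness_Hnm_iff : AGwitness 2 n (Hnm n m₁) w ↔ w ∈ soc 2 n (Hnm n m₁) ∧
    apery 2 n (Hnm n m₁) \ soc 2 n (Hnm n m₁) ⊆ Set.Iic w ∧
      ∀ h ∈ soc 2 n (Hnm n m₁), h ≠ w →
        ∃ i : Fin 2, ∃ h' ∈ soc 2 n (Hnm n m₁), h + h' = w + Pi.single i (n : ℤ) :=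
  agWitness_iff.trans <| and_congr_right fun hw => and_congr_left' <|
    forall₂_congr fun _ hh => sub_mem_Hnm_iff hh.1.1 hw.1.1

theorem fst_eq_mul_of_lt_snd (hkl : k + m₁ * l = n) (hk : 0 < k)
    (hh : h ∈ apery 2 n (Hnm n m₁)) (hlt : n - l < h 1) : h 0 = m₁ * (n - h 1) :=
  fst_eq_of_mem_apery hh <| by
    nlinarith [mul_le_mul_of_nonneg_left (show n - h 1 ≤ l - 1 by omega) m₁.cast_nonneg]

theorem mem_soc_of_lt_snd (hm : 0 < m₁) (hkl : k + m₁ * l = n) (hk : 0 < k)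
    (hh : h ∈ apery 2 n (Hnm n m₁)) (hlt : n - l < h 1) : h ∈ soc 2 n (Hnm n m₁) := by
  refine mem_soc_Hnm_iff.2 ⟨hh, fun y hy hhy => ?_⟩
  rw [le_iff_fin_two] at hhy
  have hfst : (m₁ : ℤ) * (n - h 1) ≤ m₁ * (n - y 1) := by
    rw [← fst_eq_mul_of_lt_snd hkl hk hh hlt,
      ← fst_eq_mul_of_lt_snd hkl hk hy (hlt.trans_le hhy.2)]
    exact hhy.1
  have := le_of_mul_le_mul_left hfst (by exact_mod_cast hm)
  exact eq_of_mem_apery_of_snd_eq hh hy (by omega)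

/-- The vector is `w + n e₂ - h` for `w = (n - k, n - l)`: the partner of `h` in condition (ii). -/
theorem partner_mem_soc_of_lt_snd (hm : 0 < m₁) (hkl : k + m₁ * l = n) (hk : 0 < k)
    (hh : h ∈ apery 2 n (Hnm n m₁)) (hlt : n - l < h 1) :
    ![n - k - h 0, 2 * n - l - h 1] ∈ soc 2 n (Hnm n m₁) := by
  have hfst := fst_eq_mul_of_lt_snd hkl hk hh hlt
  obtain ⟨⟨hh0, hhd⟩, -, hh1⟩ := mem_apery_Hnm_iff.1 hh
  have hA : ![n - k - h 0, 2 * n - l - h 1] ∈ apery 2 n (Hnm n m₁) := by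
    refine vec_mem_apery_iff.2 ⟨⟨?_, ?_⟩, ⟨?_, ?_⟩, ?_⟩
    · nlinarith [mul_le_mul_of_nonneg_left (show n - h 1 ≤ l - 1 by omega) m₁.cast_nonneg]
    · linarith [hh0 0]
    · nlinarith
    · linarith
    · rw [show n - k - h 0 + m₁ * (2 * n - l - h 1) = m₁ * n + m₁ * n - (h 0 + m₁ * h 1) by
        linear_combination -hkl]
      exact dvd_sub (dvd_add (dvd_mul_left _ _) (dvd_mul_left _ _)) hhd
  exact mem_soc_of_lt_snd hm hkl hk hA (by
    simp only [Matrix.cons_val_one, Matrix.cons_val_zero]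
    linarith)

theorem vec_mem_soc_of_add_mul_eq (hm : 0 < m₁) (hkl : k + m₁ * l = n) (hk : 0 < k) (hl : 0 < l) :
    ![n - k, n - l] ∈ soc 2 n (Hnm n m₁) := by
  have hA : ![n - k, n - l] ∈ apery 2 n (Hnm n m₁) := by
    refine vec_mem_apery_iff.2 ⟨⟨?_, by linarith⟩, ⟨?_, by linarith⟩, ?_⟩
    · nlinarith
    · nlinarith
    · exact ⟨m₁, by linear_combination -hkl⟩
  refine mem_soc_Hnm_iff.2 ⟨hA, fun y hy hwy => ?_⟩
  rw [le_iff_fin_two] at hwy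
  simp only [Matrix.cons_val_zero, Matrix.cons_val_one] at hwy
  refine eq_of_mem_apery_of_snd_eq hA hy ?_
  by_contra hne
  have hlt : n - l < y 1 := by simp only [Matrix.cons_val_one, Matrix.cons_val_zero] at hne; omega
  have := fst_eq_mul_of_lt_snd hkl hk hy hlt
  nlinarith [mul_le_mul_of_nonneg_left (show n - y 1 ≤ l - 1 by omega) m₁.cast_nonneg]

theorem mem_soc_of_lt_fst (hm : 0 < m₂) (hinv : m₁ * m₂ = n * c + 1) (hlk : l + m₂ * k = n)
    (hl : 0 < l) (hh : h ∈ apery 2 n (Hnm n m₁)) (hlt : n - k < h 0) :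
    h ∈ soc 2 n (Hnm n m₁) := by
  rw [mul_comm] at hinv
  exact (mem_soc_iff_coordSwap hinv).2
    (mem_soc_of_lt_snd hm hlk hl ((mem_apery_iff_coordSwap hinv).1 hh) hlt)

theorem partner_mem_soc_of_lt_fst (hm : 0 < m₂) (hinv : m₁ * m₂ = n * c + 1)
    (hlk : l + m₂ * k = n) (hl : 0 < l) (hh : h ∈ apery 2 n (Hnm n m₁)) (hlt : n - k < h 0) :
    ![2 * n - k - h 0, n - l - h 1] ∈ soc 2 n (Hnm n m₁) := by
  rw [mul_comm] at hinv
  exact (mem_soc_iff_coordSwap hinv).2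
    (partner_mem_soc_of_lt_snd hm hlk hl ((mem_apery_iff_coordSwap hinv).1 hh) hlt)

theorem agWitness_of_add_mul_eq (hm₁ : 0 < m₁) (hm₂ : 0 < m₂) (hinv : m₁ * m₂ = n * c + 1)
    (hk : 0 < k) (hl : 0 < l) (hkl : k + m₁ * l = n) (hlk : l + m₂ * k = n) :
    AGwitness 2 n (Hnm n m₁) ![n - k, n - l] := by
  have hw := vec_mem_soc_of_add_mul_eq hm₁ hkl hk hl
  have beyond : ∀ h, ¬ h ≤ ![n - k, n - l] → n - l < h 1 ∨ n - k < h 0 := fun h hle => by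
    rw [le_iff_fin_two] at hle
    simp only [Matrix.cons_val_zero, Matrix.cons_val_one] at hle
    omega
  refine agWitness_Hnm_iff.2 ⟨hw, fun h ⟨hh, hns⟩ => ?_, fun h hs hne => ?_⟩
  · by_contra hle
    rcases beyond h hle with hlt | hlt
    exacts [hns (mem_soc_of_lt_snd hm₁ hkl hk hh hlt),
      hns (mem_soc_of_lt_fst hm₂ hinv hlk hl hh hlt)]
  · have hh := (mem_soc_Hnm_iff.1 hs).1
    have hle : ¬ h ≤ ![n - k, n - l] := fun hle => hne ((mem_soc_Hnm_iff.1 hs).2 _ hw.1 hle)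
    rcases beyond h hle with hlt | hlt
    · refine ⟨1, _, partner_mem_soc_of_lt_snd hm₁ hkl hk hh hlt, ?_⟩
      refine funext <| Fin.forall_fin_two.2 ⟨by simp, ?_⟩
      simp only [Pi.add_apply, Matrix.cons_val_one, Matrix.cons_val_zero, Pi.single_eq_same]
      ring
    · refine ⟨0, _, partner_mem_soc_of_lt_fst hm₂ hinv hlk hl hh hlt, ?_⟩
      refine funext <| Fin.forall_fin_two.2 ⟨?_, by simp⟩
      simp only [Pi.add_apply, Matrix.cons_val_zero, Pi.single_eq_same]
      ring

theorem fst_eq_mul_of_diff_subset_Iic (hm : 0 < m₁) (h2 : m₁ < n)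
    (hw : w ∈ soc 2 n (Hnm n m₁))
    (hcl : apery 2 n (Hnm n m₁) \ soc 2 n (Hnm n m₁) ⊆ Set.Iic w) :
    w 0 = m₁ * (n - w 1) := by
  have hmZ : (0 : ℤ) < m₁ := by exact_mod_cast hm
  obtain ⟨t, ht, htn, hnt⟩ : ∃ t : ℤ, 0 < t ∧ m₁ * t < n ∧ n ≤ m₁ * (t + 1) := by
    have hle := Int.ediv_mul_le ((n : ℤ) - 1) hmZ.ne'
    have hlt := Int.lt_ediv_add_one_mul_self ((n : ℤ) - 1) hmZ
    refine ⟨(n - 1) / m₁, ?_, by linarith, by linarith⟩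
    by_contra! ht
    nlinarith
  -- `x` is the first Apéry element after the progression `(m₁ s, n - s)`, `s ≤ t`, and `y ≥ x`.
  have hx : ![m₁ * (t + 1) - n, n - (t + 1)] ∈ apery 2 n (Hnm n m₁) :=
    vec_mem_apery_iff.2 ⟨⟨by linarith, by linarith⟩, ⟨by nlinarith, by linarith⟩,
      ⟨m₁ - 1, by ring⟩⟩
  have hy : ![m₁ * t, n - t] ∈ apery 2 n (Hnm n m₁) :=
    vec_mem_apery_iff.2 ⟨⟨by positivity, htn⟩, ⟨by nlinarith, by linarith⟩, ⟨m₁, by ring⟩⟩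
  have hxy : ![m₁ * (t + 1) - n, n - (t + 1)] ≤ ![m₁ * t, n - t] := by
    simp only [le_iff_fin_two, Matrix.cons_val_zero, Matrix.cons_val_one]
    constructor <;> linarith
  have hxs : ![m₁ * (t + 1) - n, n - (t + 1)] ∉ soc 2 n (Hnm n m₁) := fun hs => by
    simpa using congrFun ((mem_soc_Hnm_iff.1 hs).2 _ hy hxy) 1
  have hxw := le_iff_fin_two.1 (hcl ⟨hx, hxs⟩)
  have hw1 : n - t ≤ w 1 := by
    rcases hxw.2.lt_or_eq with hlt | heq
    · simp only [Matrix.cons_val_one, Matrix.cons_val_zero] at hlt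
      omega
    · exact absurd (eq_of_mem_apery_of_snd_eq hx (mem_soc_Hnm_iff.1 hw).1 heq ▸ hw) hxs
  exact fst_eq_of_mem_apery (mem_soc_Hnm_iff.1 hw).1
    (by nlinarith [mul_le_mul_of_nonneg_left (show n - w 1 ≤ t by omega) hmZ.le])

theorem exists_add_mul_eq_of_agWitness (hm₁ : 0 < m₁) (h2 : m₁ < n) (hm₂ : 0 < m₂)
    (hm₂n : m₂ < n) (hinv : m₁ * m₂ = n * c + 1) (hw : AGwitness 2 n (Hnm n m₁) w) :
    ∃ k l : ℤ, 0 < k ∧ 0 < l ∧ k + m₁ * l = n ∧ l + m₂ * k = n := by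
  obtain ⟨hws, hcl, -⟩ := agWitness_Hnm_iff.1 hw
  have hw₁ := fst_eq_mul_of_diff_subset_Iic hm₁ h2 hws hcl
  have hw₂ := fst_eq_mul_of_diff_subset_Iic hm₂ hm₂n
    ((mem_soc_iff_coordSwap (mul_comm m₁ m₂ ▸ hinv)).1 hws) (diff_subset_Iic_coordSwap hinv hcl)
  rw [coordSwap_zero, coordSwap_one] at hw₂
  obtain ⟨-, hw0, hw1⟩ := mem_apery_Hnm_iff.1 (mem_soc_Hnm_iff.1 hws).1
  exact ⟨n - w 0, n - w 1, by linarith, by linarith, by linarith, by linarith⟩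

theorem exists_agWitness_iff (hm₁ : 0 < m₁) (h2 : m₁ < n) (hm₂ : 0 < m₂) (hm₂n : m₂ < n)
    (hinv : m₁ * m₂ = n * c + 1) :
    (∃ w, AGwitness 2 n (Hnm n m₁) w) ↔
      ∃ k l : ℤ, 0 < k ∧ 0 < l ∧ k + m₁ * l = n ∧ l + m₂ * k = n :=
  ⟨fun ⟨_, hw⟩ => exists_add_mul_eq_of_agWitness hm₁ h2 hm₂ hm₂n hinv hw,
    fun ⟨_, _, hk, hl, hkl, hlk⟩ => ⟨_, agWitness_of_add_mul_eq hm₁ hm₂ hinv hk hl hkl hlk⟩⟩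

theorem exists_add_mul_eq_iff_dvd (hm₁ : 0 < m₁) (h2 : m₁ < n) (hm₂ : 0 < m₂) (hm₂n : m₂ < n)
    (hinv : m₁ * m₂ = n * c + 1) :
    (∃ k l : ℤ, 0 < k ∧ 0 < l ∧ k + m₁ * l = n ∧ l + m₂ * k = n) ↔
      c ∣ m₁ - 1 ∧ c ∣ m₂ - 1 := by
  have hinvZ : (m₁ : ℤ) * m₂ = n * c + 1 := by exact_mod_cast hinv
  constructor
  · rintro ⟨k, l, -, -, hkl, hlk⟩
    have hn : (n : ℤ) ≠ 0 := by omega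
    have e₁ : (m₁ : ℤ) - 1 = c * k :=
      mul_left_cancel₀ hn (by linear_combination -(m₁ : ℤ) * hlk + hkl + k * hinvZ)
    have e₂ : (m₂ : ℤ) - 1 = c * l :=
      mul_left_cancel₀ hn (by linear_combination -(m₂ : ℤ) * hkl + hlk + l * hinvZ)
    exact ⟨Int.natCast_dvd_natCast.1 ⟨k, by push_cast [hm₁]; exact e₁⟩,
      Int.natCast_dvd_natCast.1 ⟨l, by push_cast [hm₂]; exact e₂⟩⟩
  · rintro ⟨⟨k, hk⟩, ⟨l, hl⟩⟩
    rcases Nat.eq_zero_or_pos c with rfl | hc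
    · obtain ⟨rfl, rfl⟩ := mul_eq_one.1 hinv
      exact ⟨1, n - 1, one_pos, by omega, by ring, by ring⟩
    have hk0 : 0 < k := by
      have : 1 < m₁ := by
        by_contra!
        obtain rfl : m₁ = 1 := by omega
        nlinarith
      exact Nat.pos_of_mul_pos_left (hk ▸ Nat.sub_pos_of_lt this)
    have hl0 : 0 < l := by
      have : 1 < m₂ := by
        by_contra!
        obtain rfl : m₂ = 1 := by omega
        nlinarith
      exact Nat.pos_of_mul_pos_left (hl ▸ Nat.sub_pos_of_lt this)
    zify [hm₁, hm₂] at hk hl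
    have hcZ : (c : ℤ) ≠ 0 := by exact_mod_cast hc.ne'
    refine ⟨k, l, by exact_mod_cast hk0, by exact_mod_cast hl0,
      mul_left_cancel₀ hcZ ?_, mul_left_cancel₀ hcZ ?_⟩
    · linear_combination -hk - (m₁ : ℤ) * hl + hinvZ
    · linear_combination -hl - (m₂ : ℤ) * hk + hinvZ

end Witness

/-- For coprime `n > m₁ ≥ 1`, `m₂` the inverse of `m₁` mod `n` with
`0 < m₂ < n + 1`, and `c = (m₁m₂ - 1)/n`: the semigroup
`H = {(u₁,u₂) ∈ ℕ² : u₁ + m₁u₂ ≡ 0 (mod n)}` is a normal orthogonal semigroup of order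
`n`, and `H` has an AG witness iff `c ∣ m₁ - 1` and `c ∣ m₂ - 1`. -/
theorem cyclic_quotient_AG_iff (n m₁ m₂ c : ℕ)
    (h1 : 1 ≤ m₁) (h2 : m₁ < n) (hcop : Nat.Coprime n m₁)
    (hm₂pos : 0 < m₂) (hm₂lt : m₂ < n + 1)
    (hinv : m₁ * m₂ = n * c + 1) :
    IsOrthogonal 2 n (Hnm n m₁) ∧ IsNormalSg 2 (Hnm n m₁) ∧
    ((∃ w, AGwitness 2 n (Hnm n m₁) w) ↔ (c ∣ m₁ - 1 ∧ c ∣ m₂ - 1)) := by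
  have hm₂n : m₂ < n := by
    refine lt_of_le_of_ne (Nat.lt_succ_iff.1 hm₂lt) ?_
    rintro rfl
    have : m₂ ∣ 1 := (Nat.dvd_add_right (dvd_mul_right m₂ c)).1 (hinv ▸ dvd_mul_left m₂ m₁)
    exact absurd (Nat.dvd_one.1 this) (by omega)
  exact ⟨isOrthogonal_Hnm (by omega) hcop, isNormalSg_Hnm,
    (exists_agWitness_iff h1 h2 hm₂pos hm₂n hinv).trans
      (exists_add_mul_eq_iff_dvd h1 h2 hm₂pos hm₂n hinv)⟩

end AGpaper
end

section
/- Let p, q, c ≥ 1 be integers and set m_1 = p·c + 1, m_2 = q·c + 1, n = p·q·c + p + q, so that m_1·m_2 − 1 = n·c and gcd(n, m_1) = 1. Let H = {(u_1,u_2) ∈ ℕ² : u_1 + m_1·u_2 ≡ 0 (mod n)} and E = {(n,0),(0,n)}. Then v = (p,q) belongs to H, v is a minimal generator of ω_H, the set B_H of minimal generators of ω_H equals {(u_1,u_2) ∈ Ap(H,E) : 0 < u_1 ≤ p or 0 < u_2 ≤ q} with |B_H| = p + q − 1, and v is an Ulrich element of H: for every a ∈ B_H with a ≠ v there exist a' ∈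 B_H and b ∈ E such that a + a' = v + b. -/
open scoped Classical

namespace AGpaper

set_option linter.unusedSectionVars false

lemma ge_of_dvd_sub {N u r : ℤ} (hN : 0 < N) (h : N ∣ u - r) (hu : 0 ≤ u) (hr : r < N) :
    r ≤ u := by
  obtain ⟨k, hk⟩ := h
  rcases le_or_gt 0 k with hk0 | hk0
  · nlinarith
  · have : k ≤ -1 := by omega
    nlinarith

lemma eq_of_dvd_sub {N u r : ℤ} (hN : 0 < N) (h : N ∣ u - r) (hu0 : 0 ≤ u) (huN : u < N)
    (hr0 : 0 ≤ r) (hrN : r < N) : u = r := by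
  obtain ⟨k, hk⟩ := h
  rcases lt_trichotomy k 0 with h1 | h1 | h1
  · have : k ≤ -1 := by omega
    nlinarith
  · subst h1; simp at hk; omega
  · have : 1 ≤ k := by omega
    nlinarith

/-- The explicit candidate set of minimal generators of `ω_H`, componentwise. -/
def BfamP (P Q M1 M2 a b : ℤ) : Prop :=
  (∃ j : ℤ, 0 ≤ j ∧ j ≤ Q - 1 ∧ a = P + j * M1 ∧ b = Q - j) ∨
  (∃ i : ℤ, 0 ≤ i ∧ i ≤ P - 1 ∧ a = P - i ∧ b = Q + i * M2)

section Core
variable {P Q C M1 M2 N : ℤ}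

lemma basics {P Q C M1 M2 N : ℤ} (hP : 1 ≤ P) (hQ : 1 ≤ Q) (hC : 1 ≤ C)
    (hM1 : M1 = P * C + 1) (hM2 : M2 = Q * C + 1) (hN : N = P * Q * C + P + Q) :
    0 < N ∧ 2 ≤ M1 ∧ 2 ≤ M2 ∧ (M1 * Q = N - P ∧ P < N ∧ Q < N) ∧ M2 * P = N - Q := by
  have h1 : (0:ℤ) < P * Q * C :=
    mul_pos (mul_pos (by omega) (by omega)) (by omega)
  have h2 : (1:ℤ) ≤ P * C := by nlinarith
  have h3 : (1:ℤ) ≤ Q * C := by nlinarith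
  refine ⟨by omega, by omega, by omega, ⟨by subst hM1 hN; ring, by omega, by omega⟩,
    by subst hM2 hN; ring⟩

variable (hP : 1 ≤ P) (hQ : 1 ≤ Q) (hC : 1 ≤ C)
variable (hM1 : M1 = P * C + 1) (hM2 : M2 = Q * C + 1) (hN : N = P * Q * C + P + Q)

include hP hQ hC hM1 hM2 hN

lemma dvd_swap {a b : ℤ} (h : N ∣ a + M1 * b) : N ∣ M2 * a + b := by
  have h2 : M2 * a + b = M2 * (a + M1 * b) - N * (C * b) := by
    subst hM1 hM2 hN; ring
  rw [h2]
  exact dvd_sub (h.mul_left M2) (dvd_mul_right N (C * b))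

lemma Bfam_props {a b : ℤ} (h : BfamP P Q M1 M2 a b) :
    1 ≤ a ∧ 1 ≤ b ∧ a < N ∧ b < N ∧ N ∣ a + M1 * b := by
  obtain ⟨hNpos, hM1two, hM2two, ⟨hK1, hPN, hQN⟩, hK2⟩ := basics hP hQ hC hM1 hM2 hN
  rcases h with ⟨j, hj0, hjQ, ha, hb⟩ | ⟨i, hi0, hiP, ha, hb⟩
  · subst ha hb
    have e1 : 0 ≤ j * M1 := mul_nonneg hj0 (by omega)
    have e2 : 0 ≤ (Q - 1 - j) * M1 := mul_nonneg (by omega) (by omega)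
    refine ⟨by nlinarith, by omega, by nlinarith, by omega, ?_⟩
    have : P + j * M1 + M1 * (Q - j) = N := by nlinarith [hK1]
    exact this ▸ dvd_refl N
  · subst ha hb
    have e1 : 0 ≤ i * M2 := mul_nonneg hi0 (by omega)
    have e2 : 0 ≤ (P - 1 - i) * M2 := mul_nonneg (by omega) (by omega)
    refine ⟨by omega, by nlinarith, by omega, by nlinarith, ?_⟩
    have : P - i + M1 * (Q + i * M2) = N * (1 + i * C) := by subst hM1 hM2 hN; ring
    exact this ▸ dvd_mul_right N _

lemma dominate {x0 x1 : ℤ} (h0 : 1 ≤ x0) (h1 : 1 ≤ x1) (hd : N ∣ x0 + M1 * x1) :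
    ∃ a b, BfamP P Q M1 M2 a b ∧ a ≤ x0 ∧ b ≤ x1 := by
  obtain ⟨hNpos, hM1pos, hM2pos, ⟨hK1, hPN, hQN⟩, hK2⟩ := basics hP hQ hC hM1 hM2 hN
  by_cases hx1 : x1 ≤ Q - 1
  · refine ⟨P + (Q - x1) * M1, x1, Or.inl ⟨Q - x1, by omega, by omega, rfl, by ring⟩, ?_, le_refl _⟩
    apply ge_of_dvd_sub hNpos ?_ (by omega)
    · nlinarith
    · have : x0 - (P + (Q - x1) * M1) = (x0 + M1 * x1) - N := by subst hM1 hN; ring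
      rw [this]; exact dvd_sub hd (dvd_refl N)
  · by_cases hx0 : x0 ≤ P - 1
    · refine ⟨x0, Q + (P - x0) * M2, Or.inr ⟨P - x0, by omega, by omega, by ring, rfl⟩,
        le_refl _, ?_⟩
      apply ge_of_dvd_sub hNpos ?_ (by omega)
      · nlinarith
      · have : x1 - (Q + (P - x0) * M2) = (M2 * x0 + x1) - N := by subst hM2 hN; ring
        rw [this]
        exact dvd_sub (dvd_swap hP hQ hC hM1 hM2 hN hd) (dvd_refl N)
    · exact ⟨P, Q, Or.inl ⟨0, le_refl _, by omega, by ring, by ring⟩, by omega, by omega⟩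

lemma Bmin {a b h0 h1 : ℤ} (hB : BfamP P Q M1 M2 a b) (hh0 : 0 ≤ h0) (hh1 : 0 ≤ h1)
    (hd : N ∣ h0 + M1 * h1) (g0 : 1 ≤ a - h0) (g1 : 1 ≤ b - h1) : h0 = 0 ∧ h1 = 0 := by
  obtain ⟨hNpos, hM1pos, hM2pos, ⟨hK1, hPN, hQN⟩, hK2⟩ := basics hP hQ hC hM1 hM2 hN
  obtain ⟨ha1, hb1, haN, hbN, _⟩ := Bfam_props hP hQ hC hM1 hM2 hN hB
  rcases hB with ⟨j, hj0, hjQ, ha, hb⟩ | ⟨i, hi0, hiP, ha, hb⟩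
  · -- b = Q - j, so h1 ≤ Q - j - 1
    rcases eq_or_lt_of_le hh1 with h1z | h1pos
    · have hdd : N ∣ h0 - 0 := by rw [← h1z] at hd; simpa using hd
      have : h0 = 0 := eq_of_dvd_sub hNpos hdd hh0 (by omega) (le_refl 0) hNpos
      exact ⟨this, h1z.symm⟩
    · exfalso
      have hr : N - M1 * h1 ≤ h0 := by
        apply ge_of_dvd_sub hNpos ?_ hh0 (by nlinarith)
        have : h0 - (N - M1 * h1) = (h0 + M1 * h1) - N := by ring
        rw [this]; exact dvd_sub hd (dvd_refl N)
      have hj1 : j + h1 ≤ Q - 1 := by omega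
      have key : a - h0 ≤ M1 * (j + h1 - Q) := by
        rw [ha]; subst hM1 hN; nlinarith
      nlinarith [mul_nonneg (by linarith : (0:ℤ) ≤ M1) (by omega : (0:ℤ) ≤ Q - 1 - j - h1)]
  · rcases eq_or_lt_of_le hh0 with h0z | h0pos
    · have hd2 : N ∣ h1 - 0 := by
        have := dvd_swap hP hQ hC hM1 hM2 hN hd
        rw [← h0z] at this; simpa using this
      have : h1 = 0 := eq_of_dvd_sub hNpos hd2 hh1 (by omega) (le_refl 0) hNpos
      exact ⟨h0z.symm, this⟩
    · exfalso
      have hd2 := dvd_swap hP hQ hC hM1 hM2 hN hd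
      have hr : N - M2 * h0 ≤ h1 := by
        apply ge_of_dvd_sub hNpos ?_ hh1 (by nlinarith)
        have : h1 - (N - M2 * h0) = (M2 * h0 + h1) - N := by ring
        rw [this]; exact dvd_sub hd2 (dvd_refl N)
      have hi1 : i + h0 ≤ P - 1 := by omega
      have key : b - h1 ≤ M2 * (i + h0 - P) := by
        rw [hb]; subst hM2 hN; nlinarith
      nlinarith [mul_nonneg (by linarith : (0:ℤ) ≤ M2) (by omega : (0:ℤ) ≤ P - 1 - i - h0)]

lemma Ap_to_B {x0 x1 : ℤ} (h0 : 0 ≤ x0) (h1 : 0 ≤ x1) (hx0N : x0 < N) (hx1N : x1 < N)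
    (hd : N ∣ x0 + M1 * x1) (hside : (0 < x0 ∧ x0 ≤ P) ∨ (0 < x1 ∧ x1 ≤ Q)) :
    BfamP P Q M1 M2 x0 x1 := by
  obtain ⟨hNpos, hM1pos, hM2pos, ⟨hK1, hPN, hQN⟩, hK2⟩ := basics hP hQ hC hM1 hM2 hN
  rcases hside with ⟨hx0p, hx0P⟩ | ⟨hx1p, hx1Q⟩
  · right
    refine ⟨P - x0, by omega, by omega, by ring, ?_⟩
    have hx1e : x1 = N - M2 * x0 := by
      apply eq_of_dvd_sub hNpos ?_ h1 hx1N (by nlinarith) (by nlinarith)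
      have : x1 - (N - M2 * x0) = (M2 * x0 + x1) - N := by ring
      rw [this]; exact dvd_sub (dvd_swap hP hQ hC hM1 hM2 hN hd) (dvd_refl N)
    rw [hx1e]; subst hM2 hN; ring
  · left
    refine ⟨Q - x1, by omega, by omega, ?_, by ring⟩
    have hx0e : x0 = N - M1 * x1 := by
      apply eq_of_dvd_sub hNpos ?_ h0 hx0N (by nlinarith) (by nlinarith)
      have : x0 - (N - M1 * x1) = (x0 + M1 * x1) - N := by ring
      rw [this]; exact dvd_sub hd (dvd_refl N)
    rw [hx0e]; subst hM1 hN; ring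

end Core

section Assembly
variable {p q c m₁ m₂ n : ℕ}

lemma mem_Hnm {n m₁ : ℕ} {x : Fin 2 → ℤ} :
    x ∈ Hnm n m₁ ↔ (0 ≤ x 0 ∧ 0 ≤ x 1) ∧ (n:ℤ) ∣ x 0 + m₁ * x 1 := by
  constructor
  · rintro ⟨h1, h2⟩; exact ⟨⟨h1 0, h1 1⟩, h2⟩
  · rintro ⟨⟨h0, h1⟩, h2⟩
    exact ⟨fun i => by fin_cases i <;> assumption, h2⟩

lemma sub_single_apply (x : Fin 2 → ℤ) (t : ℤ) :
    ((x - Pi.single 0 t : Fin 2 → ℤ)) 0 = x 0 - t ∧ ((x - Pi.single 0 t : Fin 2 → ℤ)) 1 = x 1 ∧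
    ((x - Pi.single 1 t : Fin 2 → ℤ)) 0 = x 0 ∧ ((x - Pi.single 1 t : Fin 2 → ℤ)) 1 = x 1 - t := by
  refine ⟨?_, ?_, ?_, ?_⟩ <;> simp [Pi.single_apply]

variable (hp : 1 ≤ p) (hq : 1 ≤ q) (hc : 1 ≤ c)
variable (hm₁ : m₁ = p * c + 1) (hm₂ : m₂ = q * c + 1) (hn : n = p * q * c + p + q)

include hp hq hc hm₁ hm₂ hn

lemma castH : (1:ℤ) ≤ (p:ℤ) ∧ (1:ℤ) ≤ (q:ℤ) ∧ (1:ℤ) ≤ (c:ℤ) ∧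
    ((m₁:ℤ) = (p:ℤ) * c + 1) ∧ ((m₂:ℤ) = (q:ℤ) * c + 1) ∧
    ((n:ℤ) = (p:ℤ) * q * c + p + q) := by
  subst hm₁ hm₂ hn
  refine ⟨by exact_mod_cast hp, by exact_mod_cast hq, by exact_mod_cast hc, ?_, ?_, ?_⟩ <;>
    push_cast <;> ring

lemma apery_iff {x : Fin 2 → ℤ} :
    x ∈ apery 2 n (Hnm n m₁) ↔
      0 ≤ x 0 ∧ 0 ≤ x 1 ∧ x 0 < (n:ℤ) ∧ x 1 < (n:ℤ) ∧ (n:ℤ) ∣ x 0 + (m₁:ℤ) * x 1 := by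
  obtain ⟨hP, hQ, hC, hM1, hM2, hN⟩ := castH hp hq hc hm₁ hm₂ hn
  obtain ⟨hNpos, hM1two, hM2two, ⟨hK1, hPN, hQN⟩, hK2⟩ := basics hP hQ hC hM1 hM2 hN
  obtain ⟨e00, e01, e10, e11⟩ := sub_single_apply x (n:ℤ)
  constructor
  · rintro ⟨hxH, hap⟩
    obtain ⟨⟨h0, h1⟩, hd⟩ := mem_Hnm.mp hxH
    refine ⟨h0, h1, ?_, ?_, hd⟩
    · by_contra hcon
      push_neg at hcon
      apply hap 0
      rw [mem_Hnm, e00, e01]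
      refine ⟨⟨by omega, h1⟩, ?_⟩
      have e : x 0 - n + m₁ * x 1 = (x 0 + m₁ * x 1) - n := by ring
      rw [e]; exact dvd_sub hd (dvd_refl _)
    · by_contra hcon
      push_neg at hcon
      apply hap 1
      rw [mem_Hnm, e10, e11]
      refine ⟨⟨h0, by omega⟩, ?_⟩
      have e : x 0 + m₁ * (x 1 - n) = (x 0 + m₁ * x 1) - m₁ * n := by ring
      rw [e]; exact dvd_sub hd (dvd_mul_left _ _)
  · rintro ⟨h0, h1, hx0, hx1, hd⟩
    refine ⟨mem_Hnm.mpr ⟨⟨h0, h1⟩, hd⟩, ?_⟩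
    rw [Fin.forall_fin_two]
    constructor
    · intro hmem
      obtain ⟨⟨g0, _⟩, _⟩ := mem_Hnm.mp hmem
      rw [e00] at g0
      omega
    · intro hmem
      obtain ⟨⟨_, g1⟩, _⟩ := mem_Hnm.mp hmem
      rw [e11] at g1
      omega

lemma soc_iff {x : Fin 2 → ℤ} :
    x ∈ soc 2 n (Hnm n m₁) ↔ BfamP p q m₁ m₂ ((n:ℤ) - x 0) ((n:ℤ) - x 1) := by
  obtain ⟨hP, hQ, hC, hM1, hM2, hN⟩ := castH hp hq hc hm₁ hm₂ hn
  obtain ⟨hNpos, hM1two, hM2two, ⟨hK1, hPN, hQN⟩, hK2⟩ := basics hP hQ hC hM1 hM2 hN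
  have hNN : (n:ℤ) ∣ (n:ℤ) + m₁ * n := ⟨1 + m₁, by ring⟩
  constructor
  · rintro ⟨hap, hmax⟩
    obtain ⟨h0, h1, hx0, hx1, hd⟩ := (apery_iff hp hq hc hm₁ hm₂ hn).mp hap
    obtain ⟨a, b, hB, haa, hbb⟩ := dominate hP hQ hC hM1 hM2 hN
      (by omega : (1:ℤ) ≤ (n:ℤ) - x 0) (by omega : (1:ℤ) ≤ (n:ℤ) - x 1)
      (by
        have e : ((n:ℤ) - x 0) + m₁ * ((n:ℤ) - x 1) = ((n:ℤ) + m₁ * n) - (x 0 + m₁ * x 1) := by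
          ring
        rw [e]; exact dvd_sub hNN hd)
    obtain ⟨ha1, hb1, haN, hbN, hdab⟩ := Bfam_props hP hQ hC hM1 hM2 hN hB
    have hy : x = ![(n:ℤ) - a, (n:ℤ) - b] := by
      apply hmax
      · rw [apery_iff hp hq hc hm₁ hm₂ hn]
        refine ⟨by simp; omega, by simp; omega, by simp; omega, by simp; omega, ?_⟩
        simp only [Matrix.cons_val_zero, Matrix.cons_val_one, Matrix.head_cons]
        have e : ((n:ℤ) - a) + m₁ * ((n:ℤ) - b) = ((n:ℤ) + m₁ * n) - (a + m₁ * b) := by ring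
        rw [e]; exact dvd_sub hNN hdab
      · rw [mem_Hnm]
        simp only [Pi.sub_apply, Matrix.cons_val_zero, Matrix.cons_val_one, Matrix.head_cons]
        refine ⟨⟨by omega, by omega⟩, ?_⟩
        have e : ((n:ℤ) - a - x 0) + m₁ * ((n:ℤ) - b - x 1) =
            (((n:ℤ) + m₁ * n) - (a + m₁ * b)) - (x 0 + m₁ * x 1) := by ring
        rw [e]; exact dvd_sub (dvd_sub hNN hdab) hd
    have ex0 : x 0 = (n:ℤ) - a := by rw [hy]; simp
    have ex1 : x 1 = (n:ℤ) - b := by rw [hy]; simp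
    rw [ex0, ex1, show (n:ℤ) - ((n:ℤ) - a) = a by ring, show (n:ℤ) - ((n:ℤ) - b) = b by ring]
    exact hB
  · intro hB
    obtain ⟨ha1, hb1, haN, hbN, hdab⟩ := Bfam_props hP hQ hC hM1 hM2 hN hB
    have hd : (n:ℤ) ∣ x 0 + m₁ * x 1 := by
      have e : x 0 + m₁ * x 1 = ((n:ℤ) + m₁ * n) - (((n:ℤ) - x 0) + m₁ * ((n:ℤ) - x 1)) := by
        ring
      rw [e]; exact dvd_sub hNN hdab
    constructor
    · rw [apery_iff hp hq hc hm₁ hm₂ hn]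
      exact ⟨by omega, by omega, by omega, by omega, hd⟩
    · intro y hyAp hyx
      obtain ⟨g0, g1, gx0, gx1, gd⟩ := (apery_iff hp hq hc hm₁ hm₂ hn).mp hyAp
      obtain ⟨⟨k0, k1⟩, kd⟩ := mem_Hnm.mp hyx
      rw [Pi.sub_apply] at k0
      rw [Pi.sub_apply] at k1
      rw [show (y - x) 0 + (m₁:ℤ) * (y - x) 1 = (y 0 - x 0) + m₁ * (y 1 - x 1) by
        simp [Pi.sub_apply]] at kd
      obtain ⟨z0, z1⟩ := Bmin hP hQ hC hM1 hM2 hN hB k0 k1 kd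
        (by omega : (1:ℤ) ≤ ((n:ℤ) - x 0) - (y 0 - x 0))
        (by omega : (1:ℤ) ≤ ((n:ℤ) - x 1) - (y 1 - x 1))
      funext i
      fin_cases i
      · show x 0 = y 0; omega
      · show x 1 = y 1; omega

lemma omegaH_iff {x : Fin 2 → ℤ} :
    x ∈ omegaH 2 n (Hnm n m₁) ↔
      1 ≤ x 0 ∧ 1 ≤ x 1 ∧ (n:ℤ) ∣ x 0 + (m₁:ℤ) * x 1 := by
  obtain ⟨hP, hQ, hC, hM1, hM2, hN⟩ := castH hp hq hc hm₁ hm₂ hn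
  obtain ⟨hNpos, hM1two, hM2two, ⟨hK1, hPN, hQN⟩, hK2⟩ := basics hP hQ hC hM1 hM2 hN
  constructor
  · rintro ⟨w, hw, h, hh, hx⟩
    have hB := (soc_iff hp hq hc hm₁ hm₂ hn).mp hw
    obtain ⟨ha1, hb1, haN, hbN, hdab⟩ := Bfam_props hP hQ hC hM1 hM2 hN hB
    obtain ⟨⟨k0, k1⟩, kd⟩ := mem_Hnm.mp hh
    have ex0 : x 0 = -w 0 + n + h 0 := by rw [hx]; simp
    have ex1 : x 1 = -w 1 + n + h 1 := by rw [hx]; simp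
    refine ⟨by omega, by omega, ?_⟩
    have e : x 0 + m₁ * x 1 =
        (((n:ℤ) - w 0) + m₁ * ((n:ℤ) - w 1)) + (h 0 + m₁ * h 1) := by rw [ex0, ex1]; ring
    rw [e]; exact dvd_add hdab kd
  · rintro ⟨h0, h1, hd⟩
    obtain ⟨a, b, hB, haa, hbb⟩ := dominate hP hQ hC hM1 hM2 hN h0 h1 hd
    obtain ⟨ha1, hb1, haN, hbN, hdab⟩ := Bfam_props hP hQ hC hM1 hM2 hN hB
    refine ⟨![(n:ℤ) - a, (n:ℤ) - b], ?_, x - ![a, b], ?_, ?_⟩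
    · rw [soc_iff hp hq hc hm₁ hm₂ hn]
      simp only [Matrix.cons_val_zero, Matrix.cons_val_one, Matrix.head_cons,
        sub_sub_cancel]
      exact hB
    · rw [mem_Hnm]
      simp only [Pi.sub_apply, Matrix.cons_val_zero, Matrix.cons_val_one, Matrix.head_cons]
      refine ⟨⟨by omega, by omega⟩, ?_⟩
      have e : (x 0 - a) + m₁ * (x 1 - b) = (x 0 + m₁ * x 1) - (a + m₁ * b) := by ring
      rw [e]; exact dvd_sub hd hdab
    · have hconst : ((fun _ => (n:ℤ)) : Fin 2 → ℤ) = ![(n:ℤ), (n:ℤ)] := by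
        funext i; fin_cases i <;> rfl
      rw [hconst]
      funext i
      fin_cases i <;>
        simp only [Pi.add_apply, Pi.neg_apply, Pi.sub_apply, Matrix.cons_val_zero,
          Matrix.cons_val_one, Matrix.head_cons, Fin.mk_one, Fin.zero_eta] <;> ring

lemma minGen_iff {x : Fin 2 → ℤ} :
    minGen 2 n (Hnm n m₁) x ↔ BfamP p q m₁ m₂ (x 0) (x 1) := by
  obtain ⟨hP, hQ, hC, hM1, hM2, hN⟩ := castH hp hq hc hm₁ hm₂ hn
  obtain ⟨hNpos, hM1two, hM2two, ⟨hK1, hPN, hQN⟩, hK2⟩ := basics hP hQ hC hM1 hM2 hN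
  constructor
  · rintro ⟨hΩ, hmin⟩
    obtain ⟨h0, h1, hd⟩ := (omegaH_iff hp hq hc hm₁ hm₂ hn).mp hΩ
    obtain ⟨a, b, hB, haa, hbb⟩ := dominate hP hQ hC hM1 hM2 hN h0 h1 hd
    obtain ⟨ha1, hb1, haN, hbN, hdab⟩ := Bfam_props hP hQ hC hM1 hM2 hN hB
    by_cases hxe : x = ![a, b]
    · have e0 : x 0 = a := by rw [hxe]; simp
      have e1 : x 1 = b := by rw [hxe]; simp
      rw [e0, e1]; exact hB
    · exfalso
      apply hmin (x - ![a, b]) ?_ (sub_ne_zero_of_ne hxe)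
      · rw [sub_sub_cancel]
        rw [omegaH_iff hp hq hc hm₁ hm₂ hn]
        simp only [Matrix.cons_val_zero, Matrix.cons_val_one, Matrix.head_cons]
        exact ⟨ha1, hb1, hdab⟩
      · rw [mem_Hnm]
        simp only [Pi.sub_apply, Matrix.cons_val_zero, Matrix.cons_val_one, Matrix.head_cons]
        refine ⟨⟨by omega, by omega⟩, ?_⟩
        have e : (x 0 - a) + m₁ * (x 1 - b) = (x 0 + m₁ * x 1) - (a + m₁ * b) := by ring
        rw [e]; exact dvd_sub hd hdab
  · intro hB
    obtain ⟨ha1, hb1, haN, hbN, hdab⟩ := Bfam_props hP hQ hC hM1 hM2 hN hB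
    constructor
    · rw [omegaH_iff hp hq hc hm₁ hm₂ hn]
      exact ⟨ha1, hb1, hdab⟩
    · intro h hh hne hcon
      rw [omegaH_iff hp hq hc hm₁ hm₂ hn] at hcon
      obtain ⟨g0, g1, gd⟩ := hcon
      rw [Pi.sub_apply] at g0 g1
      obtain ⟨⟨k0, k1⟩, kd⟩ := mem_Hnm.mp hh
      rw [show (x - h) 0 + (m₁:ℤ) * (x - h) 1 = (x 0 - h 0) + m₁ * (x 1 - h 1) by
        simp [Pi.sub_apply]] at gd
      obtain ⟨z0, z1⟩ := Bmin hP hQ hC hM1 hM2 hN hB k0 k1 kd (by omega) (by omega)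
      apply hne
      funext i
      fin_cases i
      · show h 0 = 0; omega
      · show h 1 = 0; omega

end Assembly

lemma vec2_zero (a b : ℤ) : (![a, b] : Fin 2 → ℤ) 0 = a := rfl
lemma vec2_one (a b : ℤ) : (![a, b] : Fin 2 → ℤ) 1 = b := rfl

/-- Let `p, q, c ≥ 1`, `m₁ = pc + 1`, `m₂ = qc + 1`,
`n = pqc + p + q`.  Then `m₁m₂ - 1 = nc`, `gcd n m₁ = 1`, `v = (p,q)` lies in
`H = {(u₁,u₂) ∈ ℕ² : u₁ + m₁u₂ ≡ 0 (mod n)}`, `v` is a minimal generator of `ω_H`, the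
set `B_H` of minimal generators of `ω_H` is
`{(u₁,u₂) ∈ Ap(H,E) : 0 < u₁ ≤ p or 0 < u₂ ≤ q}` of cardinality `p + q - 1`, and `v` is
an Ulrich element: for every minimal generator `a ≠ v` there are a minimal generator `a'`
and `b ∈ E` with `a + a' = v + b`. -/
theorem ulrich_element_explicit (p q c : ℕ) (hp : 1 ≤ p) (hq : 1 ≤ q) (hc : 1 ≤ c)
    (m₁ m₂ n : ℕ) (hm₁ : m₁ = p * c + 1) (hm₂ : m₂ = q * c + 1)
    (hn : n = p * q * c + p + q) :
    m₁ * m₂ - 1 = n * c ∧ Nat.gcd n m₁ = 1 ∧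
    (![(p : ℤ), (q : ℤ)]) ∈ Hnm n m₁ ∧
    minGen 2 n (Hnm n m₁) ![(p : ℤ), (q : ℤ)] ∧
    ({x | minGen 2 n (Hnm n m₁) x} =
      {x | x ∈ apery 2 n (Hnm n m₁) ∧
        ((0 < x 0 ∧ x 0 ≤ (p : ℤ)) ∨ (0 < x 1 ∧ x 1 ≤ (q : ℤ)))}) ∧
    {x | minGen 2 n (Hnm n m₁) x}.ncard = p + q - 1 ∧
    (∀ a : Fin 2 → ℤ, minGen 2 n (Hnm n m₁) a → a ≠ ![(p : ℤ), (q : ℤ)] →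
      ∃ a' : Fin 2 → ℤ, minGen 2 n (Hnm n m₁) a' ∧
        ∃ i : Fin 2, a + a' = ![(p : ℤ), (q : ℤ)] + Pi.single i (n : ℤ)) := by
  obtain ⟨hP, hQ, hC, hM1, hM2, hN⟩ := castH hp hq hc hm₁ hm₂ hn
  obtain ⟨hNpos, hM1two, hM2two, ⟨hK1, hPN, hQN⟩, hK2⟩ := basics hP hQ hC hM1 hM2 hN
  have hmm : m₁ * m₂ = n * c + 1 := by subst hm₁ hm₂ hn; ring
  have part1 : m₁ * m₂ - 1 = n * c := by omega
  have part2 : Nat.gcd n m₁ = 1 := by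
    have d1 : Nat.gcd n m₁ ∣ m₁ * m₂ - n * c :=
      Nat.dvd_sub ((Nat.gcd_dvd_right n m₁).mul_right m₂) ((Nat.gcd_dvd_left n m₁).mul_right c)
    rw [show m₁ * m₂ - n * c = 1 by omega] at d1
    exact Nat.dvd_one.mp d1
  have hvB : BfamP (p:ℤ) (q:ℤ) (m₁:ℤ) (m₂:ℤ) ((![(p:ℤ), (q:ℤ)]) 0) ((![(p:ℤ), (q:ℤ)]) 1) := by
    rw [vec2_zero, vec2_one]
    exact Or.inl ⟨0, le_refl 0, by omega, by ring, by ring⟩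
  have hvGen : minGen 2 n (Hnm n m₁) ![(p:ℤ), (q:ℤ)] :=
    (minGen_iff hp hq hc hm₁ hm₂ hn).mpr hvB
  have hvH : (![(p:ℤ), (q:ℤ)]) ∈ Hnm n m₁ := by
    rw [mem_Hnm, vec2_zero, vec2_one]
    refine ⟨⟨by omega, by omega⟩, ⟨1, by linarith⟩⟩
  have hsetEq : {x | minGen 2 n (Hnm n m₁) x} =
      {x | x ∈ apery 2 n (Hnm n m₁) ∧
        ((0 < x 0 ∧ x 0 ≤ (p : ℤ)) ∨ (0 < x 1 ∧ x 1 ≤ (q : ℤ)))} := by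
    ext x
    simp only [Set.mem_setOf_eq]
    rw [minGen_iff hp hq hc hm₁ hm₂ hn, apery_iff hp hq hc hm₁ hm₂ hn]
    constructor
    · intro hB
      obtain ⟨ha1, hb1, haN, hbN, hdab⟩ := Bfam_props hP hQ hC hM1 hM2 hN hB
      refine ⟨⟨by omega, by omega, by omega, by omega, hdab⟩, ?_⟩
      rcases hB with ⟨j, hj0, hjQ, ha, hb⟩ | ⟨i, hi0, hiP, ha, hb⟩
      · right; omega
      · left; omega
    · rintro ⟨⟨h0, h1, hx0, hx1, hd⟩, hside⟩
      exact Ap_to_B hP hQ hC hM1 hM2 hN h0 h1 hx0 hx1 hd hside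
  have hcard : {x | minGen 2 n (Hnm n m₁) x}.ncard = p + q - 1 := by
    classical
    set f1 : ℕ → (Fin 2 → ℤ) := fun k => ![(p:ℤ) + (k:ℤ) * m₁, (q:ℤ) - (k:ℤ)] with hf1
    set f2 : ℕ → (Fin 2 → ℤ) := fun k => ![(p:ℤ) - ((k:ℤ) + 1), (q:ℤ) + ((k:ℤ) + 1) * m₂]
      with hf2
    set F1 : Finset (Fin 2 → ℤ) := (Finset.range q).image f1 with hF1
    set F2 : Finset (Fin 2 → ℤ) := (Finset.range (p - 1)).image f2 with hF2
    have hSF : {x | minGen 2 n (Hnm n m₁) x} = ↑(F1 ∪ F2) := by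
      ext x
      rw [Set.mem_setOf_eq, minGen_iff hp hq hc hm₁ hm₂ hn]
      simp only [Finset.coe_union, Set.mem_union, hF1, hF2, Finset.coe_image,
        Set.mem_image, Finset.mem_coe, Finset.mem_range]
      constructor
      · intro hB
        rcases hB with ⟨j, hj0, hjQ, ha, hb⟩ | ⟨i, hi0, hiP, ha, hb⟩
        · left
          refine ⟨j.toNat, by omega, ?_⟩
          have hjc : ((j.toNat : ℕ) : ℤ) = j := by omega
          funext idx
          fin_cases idx
          · show (p:ℤ) + (j.toNat:ℤ) * m₁ = x 0
            rw [hjc, ha]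
          · show (q:ℤ) - (j.toNat:ℤ) = x 1
            rw [hjc, hb]
        · rcases eq_or_lt_of_le hi0 with hiz | hipos
          · left
            refine ⟨0, by omega, ?_⟩
            funext idx
            fin_cases idx
            · show (p:ℤ) + ((0:ℕ):ℤ) * m₁ = x 0
              rw [ha, ← hiz]; push_cast; ring
            · show (q:ℤ) - ((0:ℕ):ℤ) = x 1
              rw [hb, ← hiz]; push_cast; ring
          · right
            refine ⟨(i - 1).toNat, by omega, ?_⟩
            have hic : (((i - 1).toNat : ℕ) : ℤ) = i - 1 := by omega
            funext idx
            fin_cases idx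
            · show (p:ℤ) - (((i-1).toNat:ℤ) + 1) = x 0
              rw [hic, ha]; ring
            · show (q:ℤ) + (((i-1).toNat:ℤ) + 1) * m₂ = x 1
              rw [hic, hb]; ring
      · rintro (⟨k, hk, hgk⟩ | ⟨k, hk, hgk⟩)
        · refine Or.inl ⟨(k:ℤ), by omega, by omega, ?_, ?_⟩
          · rw [← hgk]; rfl
          · rw [← hgk]; rfl
        · refine Or.inr ⟨(k:ℤ) + 1, by omega, by omega, ?_, ?_⟩
          · rw [← hgk]; rfl
          · rw [← hgk]; rfl
    rw [hSF, Set.ncard_coe_finset]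
    have hM1nn : (0:ℤ) ≤ (m₁:ℤ) := by omega
    have hdisj : Disjoint F1 F2 := by
      rw [Finset.disjoint_left]
      rintro x hx1 hx2
      rw [hF1, Finset.mem_image] at hx1
      rw [hF2, Finset.mem_image] at hx2
      obtain ⟨k, _, ek⟩ := hx1
      obtain ⟨l, _, el⟩ := hx2
      have e1 : (p:ℤ) + (k:ℤ) * m₁ = x 0 := by rw [← ek]; rfl
      have e2 : (p:ℤ) - ((l:ℤ) + 1) = x 0 := by rw [← el]; rfl
      have hkm : (0:ℤ) ≤ (k:ℤ) * m₁ := mul_nonneg (by omega) hM1nn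
      have hl1 : (1:ℤ) ≤ (l:ℤ) + 1 := by omega
      linarith
    rw [Finset.card_union_of_disjoint hdisj]
    have c1 : F1.card = q := by
      rw [hF1, Finset.card_image_of_injOn, Finset.card_range]
      intro k1 _ k2 _ he
      have e1 : (q:ℤ) - (k1:ℤ) = (q:ℤ) - (k2:ℤ) := by
        have := congrFun he 1; exact this
      omega
    have c2 : F2.card = p - 1 := by
      rw [hF2, Finset.card_image_of_injOn, Finset.card_range]
      intro k1 _ k2 _ he
      have e1 : (p:ℤ) - ((k1:ℤ) + 1) = (p:ℤ) - ((k2:ℤ) + 1) := by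
        have := congrFun he 0; exact this
      omega
    omega
  have hulrich : ∀ a : Fin 2 → ℤ, minGen 2 n (Hnm n m₁) a → a ≠ ![(p : ℤ), (q : ℤ)] →
      ∃ a' : Fin 2 → ℤ, minGen 2 n (Hnm n m₁) a' ∧
        ∃ i : Fin 2, a + a' = ![(p : ℤ), (q : ℤ)] + Pi.single i (n : ℤ) := by
    intro a hA hAne
    have hs0 : (Pi.single (0:Fin 2) (n:ℤ) : Fin 2 → ℤ) = ![(n:ℤ), 0] := by
      funext idx; fin_cases idx <;> simp [Pi.single_apply]
    have hs1 : (Pi.single (1:Fin 2) (n:ℤ) : Fin 2 → ℤ) = ![0, (n:ℤ)] := by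
      funext idx; fin_cases idx <;> simp [Pi.single_apply]
    have hB := (minGen_iff hp hq hc hm₁ hm₂ hn).mp hA
    rcases hB with ⟨j, hj0, hjQ, ha, hb⟩ | ⟨i, hi0, hiP, ha, hb⟩
    · have hjpos : 1 ≤ j := by
        rcases eq_or_lt_of_le hj0 with hjz | hjpos
        · exfalso
          apply hAne
          funext idx
          fin_cases idx
          · show a 0 = (p:ℤ); rw [ha, ← hjz]; ring
          · show a 1 = (q:ℤ); rw [hb, ← hjz]; ring
        · omega
      refine ⟨![(p:ℤ) + ((q:ℤ) - j) * m₁, j], ?_, 0, ?_⟩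
      · rw [minGen_iff hp hq hc hm₁ hm₂ hn]
        refine Or.inl ⟨(q:ℤ) - j, by omega, by omega, ?_, ?_⟩
        · rw [vec2_zero]
        · rw [vec2_one]; ring
      · rw [hs0]
        funext idx
        fin_cases idx
        · show a 0 + ((p:ℤ) + ((q:ℤ) - j) * m₁) = (p:ℤ) + (n:ℤ)
          rw [ha]
          linear_combination hK1
        · show a 1 + (j:ℤ) = (q:ℤ) + 0
          rw [hb]; ring
    · have hipos : 1 ≤ i := by
        rcases eq_or_lt_of_le hi0 with hiz | hipos
        · exfalso
          apply hAne
          funext idx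
          fin_cases idx
          · show a 0 = (p:ℤ); rw [ha, ← hiz]; ring
          · show a 1 = (q:ℤ); rw [hb, ← hiz]; ring
        · omega
      refine ⟨![i, (q:ℤ) + ((p:ℤ) - i) * m₂], ?_, 1, ?_⟩
      · rw [minGen_iff hp hq hc hm₁ hm₂ hn]
        refine Or.inr ⟨(p:ℤ) - i, by omega, by omega, ?_, ?_⟩
        · rw [vec2_zero]; ring
        · rw [vec2_one]
      · rw [hs1]
        funext idx
        fin_cases idx
        · show a 0 + (i:ℤ) = (p:ℤ) + 0
          rw [ha]; ring
        · show a 1 + ((q:ℤ) + ((p:ℤ) - i) * m₂) = (q:ℤ) + (n:ℤ)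
          rw [hb]
          linear_combination hK2
  exact ⟨part1, part2, hvH, hvGen, hsetEq, hcard, hulrich⟩

end AGpaper
end
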